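/- arXiv:2304.13646 — 7 statements merged into one kernel-verified Lean document; each statement's English description precedes it below -/
import Mathlib

section
/- Let Xbar = [-Xmax, Xmax]^p and let C be a finite (2*eps/sqrt(p))-grid of Xbar (i.e., points with coordinates in an arithmetic progression of step 2*eps/sqrt(p)), so that every point of Xbar is within Euclidean distance eps of C, and distinct points of C are at Euclidean distance at least 2*eps/sqrt(p). Let f0: Xbar -> R be L-Lipschitz. Define, with c = L*sqrt(p)/(2*eps), the function f_C(x) = max_{xhat in C} [ c*xhat^T(x - xhat) + (c/2)*||xhat||^2 + (1/2)*f0(xhat) ] - max_{xhat in C} [ c*xhat^T(x - xhat) + (c/2)*||xhat||^2 - (1/2)*f0(xhat) ]. Then f_C(xhat) = f0(xhat) for every xhat in C. -/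
/-!
Write `q = (c/2)‖·‖²`. The `z`-th term of either maximum is the tangent of `q` at `z`, shifted by
`±f0(z)/2`, and at a grid point `x` it falls short of `q(x) ± f0(x)/2` by
`(c/2)‖x - z‖² ∓ (f0(z) - f0(x))/2`. This gap is nonnegative because, on a `δ`-separated set,
`L‖x - z‖ ≤ (L/δ)‖x - z‖²`, and `c = L/δ` for `δ = 2ε/√p`. Hence both maxima are attained at
`z = x`, and their difference is `f0(x)`.
-/

open scoped RealInnerProductSpace

lemma Finset.sup'_eq_of_mem_of_forall_le {α β : Type*} [SemilatticeSup α] {s : Finset β}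
    (H : s.Nonempty) {f : β → α} {b : β} (hb : b ∈ s) (h : ∀ a ∈ s, f a ≤ f b) :
    s.sup' H f = f b :=
  le_antisymm (Finset.sup'_le H f h) (Finset.le_sup' f hb)

lemma mul_inner_sub_add_half_mul_norm_sq {E : Type*} [NormedAddCommGroup E]
    [InnerProductSpace ℝ E] (c : ℝ) (x z : E) :
    c * ⟪z, x - z⟫ + c / 2 * ‖z‖ ^ 2 = c / 2 * ‖x‖ ^ 2 - c / 2 * ‖x - z‖ ^ 2 := by
  rw [norm_sub_sq_real, inner_sub_right, real_inner_comm, real_inner_self_eq_norm_sq]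
  ring

lemma abs_sub_le_div_mul_norm_sq_of_separated {E : Type*} [SeminormedAddCommGroup E]
    {f : E → ℝ} {x z : E} {L δ : ℝ} (hδ : 0 < δ) (hlip : |f z - f x| ≤ L * ‖x - z‖)
    (hsep : z ≠ x → δ ≤ ‖x - z‖) : |f z - f x| ≤ L / δ * ‖x - z‖ ^ 2 := by
  rcases eq_or_ne z x with rfl | hne
  · simp
  have hδr : δ ≤ ‖x - z‖ := hsep hne
  have hL : 0 ≤ L := nonneg_of_mul_nonneg_left ((abs_nonneg _).trans hlip) (hδ.trans_le hδr)
  calc |f z - f x| ≤ L / δ * δ * ‖x - z‖ := by rwa [div_mul_cancel₀ L hδ.ne']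
    _ ≤ L / δ * ‖x - z‖ * ‖x - z‖ := by gcongr
    _ = L / δ * ‖x - z‖ ^ 2 := by ring

theorem stmt4_general (p : ℕ) (hp : 0 < p) (ε L : ℝ) (hε : 0 < ε)
    (Xbar : Set (EuclideanSpace ℝ (Fin p)))
    (C : Finset (EuclideanSpace ℝ (Fin p))) (hCne : C.Nonempty)
    (hsub : ↑C ⊆ Xbar)
    (hsep : ∀ x ∈ C, ∀ y ∈ C, x ≠ y → 2 * ε / Real.sqrt p ≤ ‖x - y‖)
    (f0 : EuclideanSpace ℝ (Fin p) → ℝ)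
    (hlip : ∀ x ∈ Xbar, ∀ y ∈ Xbar, |f0 x - f0 y| ≤ L * ‖x - y‖) :
    ∀ xhat ∈ C,
      (C.sup' hCne fun z => (L * Real.sqrt p / (2 * ε)) * ⟪z, xhat - z⟫
          + (L * Real.sqrt p / (2 * ε)) / 2 * ‖z‖ ^ 2 + f0 z / 2)
      - (C.sup' hCne fun z => (L * Real.sqrt p / (2 * ε)) * ⟪z, xhat - z⟫
          + (L * Real.sqrt p / (2 * ε)) / 2 * ‖z‖ ^ 2 - f0 z / 2)
      = f0 xhat := by
  intro x hx
  have hδ : 0 < 2 * ε / Real.sqrt p := by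
    have : 0 < Real.sqrt p := Real.sqrt_pos.2 (by exact_mod_cast hp)
    positivity
  have quadratic_bound : ∀ z ∈ C,
      |f0 z - f0 x| ≤ L * Real.sqrt p / (2 * ε) * ‖x - z‖ ^ 2 := fun z hz => by
    rw [← div_div_eq_mul_div]
    refine abs_sub_le_div_mul_norm_sq_of_separated hδ ?_ fun hne => hsep x hx z hz hne.symm
    rw [norm_sub_rev]
    exact hlip z (hsub hz) x (hsub hx)
  rw [Finset.sup'_eq_of_mem_of_forall_le hCne hx, Finset.sup'_eq_of_mem_of_forall_le hCne hx]
  · ring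
  all_goals
    intro z hz
    rw [mul_inner_sub_add_half_mul_norm_sq, mul_inner_sub_add_half_mul_norm_sq, sub_self,
      norm_zero]
    linarith [abs_le.1 (quadratic_bound z hz)]

/-- Interpolation property of the difference-of-max-affine construction: with
`c = L√p/(2ε)`, the function
`f_C(x) = max_{ẑ ∈ C}[c ẑ⬝(x-ẑ) + (c/2)‖ẑ‖² + f0(ẑ)/2] - max_{ẑ ∈ C}[c ẑ⬝(x-ẑ) + (c/2)‖ẑ‖² - f0(ẑ)/2]`
interpolates `f0` on the grid `C`. -/
theorem stmt4 (p : ℕ) (hp : 0 < p) (Xmax ε L : ℝ) (hε : 0 < ε) (hL : 0 ≤ L)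
    (Xbar : Set (EuclideanSpace ℝ (Fin p)))
    (hXbar : Xbar = {x : EuclideanSpace ℝ (Fin p) | ∀ i, |x i| ≤ Xmax})
    (C : Finset (EuclideanSpace ℝ (Fin p))) (hCne : C.Nonempty)
    (hsub : ↑C ⊆ Xbar)
    (hcover : ∀ x ∈ Xbar, ∃ xhat ∈ C, ‖x - xhat‖ ≤ ε)
    (hsep : ∀ x ∈ C, ∀ y ∈ C, x ≠ y → 2 * ε / Real.sqrt p ≤ ‖x - y‖)
    (f0 : EuclideanSpace ℝ (Fin p) → ℝ)
    (hlip : ∀ x ∈ Xbar, ∀ y ∈ Xbar, |f0 x - f0 y| ≤ L * ‖x - y‖) :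
    ∀ xhat ∈ C,
      (C.sup' hCne fun z => (L * Real.sqrt p / (2 * ε)) * ⟪z, xhat - z⟫
          + (L * Real.sqrt p / (2 * ε)) / 2 * ‖z‖ ^ 2 + f0 z / 2)
      - (C.sup' hCne fun z => (L * Real.sqrt p / (2 * ε)) * ⟪z, xhat - z⟫
          + (L * Real.sqrt p / (2 * ε)) / 2 * ‖z‖ ^ 2 - f0 z / 2)
      = f0 xhat :=
  stmt4_general p hp ε L hε Xbar C hCne hsub hsep f0 hlip
end

section
/- Under the setting of the interpolating construction (C a finite set of pairwise Euclidean distance >= 2*eps/sqrt(p), f0 L-Lipschitz, c = L*sqrt(p)/(2*eps)), the interpolating function f_C is Lipschitz continuous on Xbar with Lipschitz constant (sqrt(p)+2)*L with respect to the Euclidean norm. -/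
open scoped RealInnerProductSpace

private lemma quad_bound {sp r ε : ℝ} (hsp : 1 ≤ sp) (hε : 0 < ε) (hr : 0 ≤ r)
    (h : sp * r ^ 2 ≤ sp * ε ^ 2 + 2 * ε * r + 2 * ε ^ 2) :
    sp * r ≤ sp * ε + 2 * ε := by
  nlinarith [mul_nonneg (by linarith : (0:ℝ) ≤ sp)
      (by linarith : (0:ℝ) ≤ sp * ε ^ 2 + 2 * ε * r + 2 * ε ^ 2 - sp * r ^ 2),
    mul_pos (by nlinarith : (0:ℝ) < sp * r + sp * ε) hε]

private lemma close_aux {p : ℕ} (hp : 0 < p) {ε L : ℝ} (hε : 0 < ε) (hL : 0 < L)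
    {Xbar : Set (EuclideanSpace ℝ (Fin p))}
    {C : Finset (EuclideanSpace ℝ (Fin p))}
    (hsub : ↑C ⊆ Xbar)
    {g : EuclideanSpace ℝ (Fin p) → ℝ}
    (hg : ∀ a ∈ Xbar, ∀ b ∈ Xbar, |g a - g b| ≤ L * ‖a - b‖)
    {x z1 z0 : EuclideanSpace ℝ (Fin p)} (hz1 : z1 ∈ C) (hz0 : z0 ∈ C)
    (hx0 : ‖x - z0‖ ≤ ε)
    (hmax : (L * Real.sqrt p / (2 * ε)) * ⟪z0, x - z0⟫
          + (L * Real.sqrt p / (2 * ε)) / 2 * ‖z0‖ ^ 2 + g z0 / 2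
        ≤ (L * Real.sqrt p / (2 * ε)) * ⟪z1, x - z1⟫
          + (L * Real.sqrt p / (2 * ε)) / 2 * ‖z1‖ ^ 2 + g z1 / 2) :
    ‖x - z1‖ ≤ ε + 2 * ε / Real.sqrt p := by
  set sp := Real.sqrt p with hspdef
  have hsp1 : 1 ≤ sp := by
    rw [hspdef]
    have : (1:ℝ) ≤ (p:ℝ) := by exact_mod_cast hp
    nlinarith [Real.sq_sqrt (by positivity : (0:ℝ) ≤ (p:ℝ)),
      Real.sqrt_nonneg (p:ℝ)]
  have hsppos : 0 < sp := by linarith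
  set c := L * sp / (2 * ε) with hcdef
  have hid : ∀ z : EuclideanSpace ℝ (Fin p),
      c * ⟪z, x - z⟫ + c / 2 * ‖z‖ ^ 2 = c / 2 * ‖x‖ ^ 2 - c / 2 * ‖x - z‖ ^ 2 := by
    intro z
    have h1 : ‖x - z‖ ^ 2 = ‖x‖ ^ 2 - 2 * ⟪x, z⟫ + ‖z‖ ^ 2 := norm_sub_sq_real x z
    have h2 : ⟪z, x - z⟫ = ⟪x, z⟫ - ‖z‖ ^ 2 := by
      rw [inner_sub_right, real_inner_self_eq_norm_sq, real_inner_comm]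
    rw [h2, h1]; ring
  set r := ‖x - z1‖ with hrdef
  have hr : 0 ≤ r := norm_nonneg _
  have hdist : ‖z1 - z0‖ ≤ r + ε := by
    calc ‖z1 - z0‖ ≤ ‖z1 - x‖ + ‖x - z0‖ := norm_sub_le_norm_sub_add_norm_sub z1 x z0
      _ ≤ r + ε := by rw [norm_sub_rev]; linarith
  have hglip : g z1 - g z0 ≤ L * (r + ε) := by
    have h2 := abs_le.mp (hg z1 (hsub hz1) z0 (hsub hz0))
    have : L * ‖z1 - z0‖ ≤ L * (r + ε) := mul_le_mul_of_nonneg_left hdist hL.le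
    linarith [h2.2]
  have hmain : c * r ^ 2 ≤ c * ε ^ 2 + L * (r + ε) := by
    have e1 := hid z1
    have e0 := hid z0
    have hx0sq : ‖x - z0‖ ^ 2 ≤ ε ^ 2 := by nlinarith [norm_nonneg (x - z0)]
    have hcpos : 0 < c := by rw [hcdef]; positivity
    nlinarith [hmax, hglip]
  have hscal : sp * r ^ 2 ≤ sp * ε ^ 2 + 2 * ε * r + 2 * ε ^ 2 := by
    have hL2 : L * (sp * r ^ 2) ≤ L * (sp * ε ^ 2 + 2 * ε * r + 2 * ε ^ 2) := by
      have hc2 : c * (2 * ε) = L * sp := by rw [hcdef]; field_simp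
      nlinarith [hmain]
    exact le_of_mul_le_mul_left hL2 hL
  have hq := quad_bound hsp1 hε hr hscal
  have h1 : r ≤ (sp * ε + 2 * ε) / sp := by
    rw [le_div_iff₀ hsppos]; linarith [mul_comm r sp]
  calc r ≤ (sp * ε + 2 * ε) / sp := h1
    _ = ε + 2 * ε / sp := by field_simp

/-- Lipschitz continuity of the interpolating difference-of-max-affine function `f_C`
on the cube `Xbar = [-Xmax, Xmax]^p`, with Lipschitz constant `(√p + 2) L`. -/
theorem stmt5 (p : ℕ) (hp : 0 < p) (Xmax ε L : ℝ) (hε : 0 < ε) (hL : 0 ≤ L)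
    (Xbar : Set (EuclideanSpace ℝ (Fin p)))
    (hXbar : Xbar = {x : EuclideanSpace ℝ (Fin p) | ∀ i, |x i| ≤ Xmax})
    (C : Finset (EuclideanSpace ℝ (Fin p))) (hCne : C.Nonempty)
    (hsub : ↑C ⊆ Xbar)
    (hcover : ∀ x ∈ Xbar, ∃ xhat ∈ C, ‖x - xhat‖ ≤ ε)
    (hsep : ∀ x ∈ C, ∀ y ∈ C, x ≠ y → 2 * ε / Real.sqrt p ≤ ‖x - y‖)
    (f0 : EuclideanSpace ℝ (Fin p) → ℝ)
    (hlip : ∀ x ∈ Xbar, ∀ y ∈ Xbar, |f0 x - f0 y| ≤ L * ‖x - y‖)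
    (fC : EuclideanSpace ℝ (Fin p) → ℝ)
    (hfC : ∀ x, fC x =
      (C.sup' hCne fun z => (L * Real.sqrt p / (2 * ε)) * ⟪z, x - z⟫
          + (L * Real.sqrt p / (2 * ε)) / 2 * ‖z‖ ^ 2 + f0 z / 2)
      - (C.sup' hCne fun z => (L * Real.sqrt p / (2 * ε)) * ⟪z, x - z⟫
          + (L * Real.sqrt p / (2 * ε)) / 2 * ‖z‖ ^ 2 - f0 z / 2)) :
    ∀ x ∈ Xbar, ∀ y ∈ Xbar, |fC x - fC y| ≤ (Real.sqrt p + 2) * L * ‖x - y‖ := by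
  rcases hL.eq_or_lt with hL0 | hLpos
  · intro x hx y hy
    have hconst : fC x = fC y := by
      rw [hfC x, hfC y]; simp [← hL0]
    rw [hconst, sub_self, abs_zero]
    have h0 : (Real.sqrt p + 2) * L * ‖x - y‖ = 0 := by rw [← hL0]; ring
    rw [h0]
  -- main case
  set sp := Real.sqrt p with hspdef
  have hsp1 : 1 ≤ sp := by
    rw [hspdef]
    have : (1:ℝ) ≤ (p:ℝ) := by exact_mod_cast hp
    nlinarith [Real.sq_sqrt (by positivity : (0:ℝ) ≤ (p:ℝ)),
      Real.sqrt_nonneg (p:ℝ)]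
  have hsppos : 0 < sp := by linarith
  set c := L * sp / (2 * ε) with hcdef
  have hcpos : 0 < c := by rw [hcdef]; positivity
  -- negated Lipschitz function
  have hlipneg : ∀ a ∈ Xbar, ∀ b ∈ Xbar, |(-f0 a) - (-f0 b)| ≤ L * ‖a - b‖ := by
    intro a ha b hb
    have h := hlip b hb a ha
    rw [norm_sub_rev] at h
    calc |(-f0 a) - (-f0 b)| = |f0 b - f0 a| := by
          rw [show -f0 a - -f0 b = f0 b - f0 a by ring]
      _ ≤ L * ‖a - b‖ := h
  -- local one-step bound
  have step : ∀ u ∈ Xbar, ∀ v ∈ Xbar,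
      fC u - fC v ≤ (sp + 2) * L * ‖u - v‖ + c * ‖u - v‖ ^ 2 := by
    intro u hu v hv
    obtain ⟨z1, hz1C, hz1⟩ := Finset.exists_mem_eq_sup' hCne
      (fun z => c * ⟪z, u - z⟫ + c / 2 * ‖z‖ ^ 2 + f0 z / 2)
    obtain ⟨w1, hw1C, hw1⟩ := Finset.exists_mem_eq_sup' hCne
      (fun z => c * ⟪z, v - z⟫ + c / 2 * ‖z‖ ^ 2 - f0 z / 2)
    have hAv : c * ⟪z1, v - z1⟫ + c / 2 * ‖z1‖ ^ 2 + f0 z1 / 2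
        ≤ C.sup' hCne (fun z => c * ⟪z, v - z⟫ + c / 2 * ‖z‖ ^ 2 + f0 z / 2) :=
      Finset.le_sup' (fun z => c * ⟪z, v - z⟫ + c / 2 * ‖z‖ ^ 2 + f0 z / 2) hz1C
    have hBu : c * ⟪w1, u - w1⟫ + c / 2 * ‖w1‖ ^ 2 - f0 w1 / 2
        ≤ C.sup' hCne (fun z => c * ⟪z, u - z⟫ + c / 2 * ‖z‖ ^ 2 - f0 z / 2) :=
      Finset.le_sup' (fun z => c * ⟪z, u - z⟫ + c / 2 * ‖z‖ ^ 2 - f0 z / 2) hw1C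
    have hinz' : c * ⟪z1, u - z1⟫ - c * ⟪z1, v - z1⟫ = c * ⟪z1, u - v⟫ := by
      rw [inner_sub_right, inner_sub_right, inner_sub_right]; ring
    have hinw' : c * ⟪w1, u - w1⟫ - c * ⟪w1, v - w1⟫ = c * ⟪w1, u - v⟫ := by
      rw [inner_sub_right, inner_sub_right, inner_sub_right]; ring
    have hsplit' : c * ⟪z1 - w1, u - v⟫ = c * ⟪z1, u - v⟫ - c * ⟪w1, u - v⟫ := by
      rw [inner_sub_left]; ring
    have hstep1 : fC u - fC v ≤ c * ⟪z1 - w1, u - v⟫ := by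
      rw [hfC u, hfC v]
      linarith [hAv, hBu, hz1, hw1, hinz', hinw', hsplit']
    -- closeness of maximizers
    obtain ⟨z0, hz0C, hz0⟩ := hcover u hu
    obtain ⟨w0, hw0C, hw0⟩ := hcover v hv
    have hz1close : ‖u - z1‖ ≤ ε + 2 * ε / sp := by
      have hmaxz : c * ⟪z0, u - z0⟫ + c / 2 * ‖z0‖ ^ 2 + f0 z0 / 2
          ≤ c * ⟪z1, u - z1⟫ + c / 2 * ‖z1‖ ^ 2 + f0 z1 / 2 :=
        (Finset.le_sup' (fun z => c * ⟪z, u - z⟫ + c / 2 * ‖z‖ ^ 2 + f0 z / 2)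
          hz0C).trans (le_of_eq hz1)
      exact close_aux hp hε hLpos hsub hlip hz1C hz0C hz0 hmaxz
    have hw1close : ‖v - w1‖ ≤ ε + 2 * ε / sp := by
      have hmaxw : c * ⟪w0, v - w0⟫ + c / 2 * ‖w0‖ ^ 2 + -f0 w0 / 2
          ≤ c * ⟪w1, v - w1⟫ + c / 2 * ‖w1‖ ^ 2 + -f0 w1 / 2 := by
        have h2 := (Finset.le_sup' (fun z => c * ⟪z, v - z⟫ + c / 2 * ‖z‖ ^ 2 - f0 z / 2)
          hw0C).trans (le_of_eq hw1)
        linarith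
      exact close_aux (g := fun z => -f0 z) hp hε hLpos hsub hlipneg hw1C hw0C hw0 hmaxw
    -- combine
    have hcs : ⟪z1 - w1, u - v⟫ ≤ ‖z1 - w1‖ * ‖u - v‖ := real_inner_le_norm _ _
    have hd : (0:ℝ) ≤ ‖u - v‖ := norm_nonneg _
    have hzw : ‖z1 - w1‖ ≤ (2 * ε + 4 * ε / sp) + ‖u - v‖ := by
      calc ‖z1 - w1‖ ≤ ‖z1 - v‖ + ‖v - w1‖ := norm_sub_le_norm_sub_add_norm_sub _ _ _
        _ ≤ (‖z1 - u‖ + ‖u - v‖) + ‖v - w1‖ := by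
            linarith [norm_sub_le_norm_sub_add_norm_sub z1 u v]
        _ = (‖u - z1‖ + ‖u - v‖) + ‖v - w1‖ := by rw [norm_sub_rev z1 u]
        _ ≤ ((ε + 2 * ε / sp) + ‖u - v‖) + (ε + 2 * ε / sp) := by linarith
        _ = (2 * ε + 4 * ε / sp) + ‖u - v‖ := by ring
    have hcoef : c * (2 * ε + 4 * ε / sp) = (sp + 2) * L := by
      rw [hcdef]; field_simp; ring
    calc fC u - fC v ≤ c * ⟪z1 - w1, u - v⟫ := hstep1
      _ ≤ c * (‖z1 - w1‖ * ‖u - v‖) := mul_le_mul_of_nonneg_left hcs hcpos.le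
      _ ≤ c * (((2 * ε + 4 * ε / sp) + ‖u - v‖) * ‖u - v‖) := by
          apply mul_le_mul_of_nonneg_left _ hcpos.le
          exact mul_le_mul_of_nonneg_right hzw hd
      _ = c * (2 * ε + 4 * ε / sp) * ‖u - v‖ + c * ‖u - v‖ ^ 2 := by ring
      _ = (sp + 2) * L * ‖u - v‖ + c * ‖u - v‖ ^ 2 := by rw [hcoef]
  -- convexity of the cube
  have hmem : ∀ x ∈ Xbar, ∀ y ∈ Xbar, ∀ t : ℝ, 0 ≤ t → t ≤ 1 →
      x + t • (y - x) ∈ Xbar := by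
    intro x hx y hy t ht0 ht1
    rw [hXbar] at hx hy ⊢
    intro i
    have hxi := abs_le.mp (hx i)
    have hyi := abs_le.mp (hy i)
    have happ : (x + t • (y - x)) i = x i + t * (y i - x i) := by
      simp [PiLp.add_apply, PiLp.smul_apply, PiLp.sub_apply, smul_eq_mul]
    rw [happ, abs_le]
    constructor
    · nlinarith [mul_nonneg (by linarith : (0:ℝ) ≤ 1 - t) (by linarith : 0 ≤ x i + Xmax),
        mul_nonneg ht0 (by linarith : 0 ≤ y i + Xmax)]
    · nlinarith [mul_nonneg (by linarith : (0:ℝ) ≤ 1 - t) (by linarith : 0 ≤ Xmax - x i),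
        mul_nonneg ht0 (by linarith : 0 ≤ Xmax - y i)]
  -- telescoping bound
  have key : ∀ x ∈ Xbar, ∀ y ∈ Xbar, fC x - fC y ≤ (sp + 2) * L * ‖x - y‖ := by
    intro x hx y hy
    set d := ‖x - y‖ with hddef
    have hd0 : 0 ≤ d := norm_nonneg _
    refine le_of_forall_pos_le_add ?_
    intro δ hδ
    obtain ⟨n, hn⟩ := exists_nat_gt (c * d ^ 2 / δ)
    have hnpos : 0 < n := by
      by_contra hc0
      push_neg at hc0
      interval_cases n
      simp at hn
      nlinarith [mul_nonneg hcpos.le (sq_nonneg d), div_nonneg (mul_nonneg hcpos.le (sq_nonneg d)) hδ.le]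
    have hnR : (0:ℝ) < n := by exact_mod_cast hnpos
    have hnne : (n:ℝ) ≠ 0 := ne_of_gt hnR
    -- points on the segment
    set g : ℕ → ℝ := fun k => fC (x + ((k : ℝ) / n) • (y - x)) with hgdef
    have hg0 : g 0 = fC x := by simp [hgdef]
    have hgn : g n = fC y := by
      have : ((n : ℝ) / n) = 1 := div_self hnne
      simp [hgdef, this]
    have hterm : ∀ k ∈ Finset.range n,
        g k - g (k + 1) ≤ (sp + 2) * L * (d / n) + c * (d / n) ^ 2 := by
      intro k hk
      have hkn : k < n := Finset.mem_range.mp hk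
      set u := x + ((k : ℝ) / n) • (y - x) with hudef
      set v := x + (((k : ℝ) + 1) / n) • (y - x) with hvdef
      have hu : u ∈ Xbar := by
        apply hmem x hx y hy
        · positivity
        · rw [div_le_one hnR]; exact_mod_cast hkn.le
      have hv : v ∈ Xbar := by
        apply hmem x hx y hy
        · positivity
        · rw [div_le_one hnR]
          have : (k : ℝ) + 1 ≤ n := by exact_mod_cast hkn
          linarith
      have huv : u - v = (-(1 / (n:ℝ))) • (y - x) := by
        rw [hudef, hvdef, show ((k : ℝ) + 1) / n = (k : ℝ) / n + 1 / n by ring]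
        module
      have hnorm : ‖u - v‖ = d / n := by
        rw [huv, norm_smul]
        simp only [norm_neg, Real.norm_eq_abs, abs_neg, abs_div, abs_one]
        rw [abs_of_pos hnR, norm_sub_rev y x, ← hddef]
        ring
      have hkk : g (k + 1) = fC v := by
        rw [hgdef, hvdef]
        norm_num
      have hk0 : g k = fC u := rfl
      rw [hk0, hkk]
      have := step u hu v hv
      rw [hnorm] at this
      exact this
    have htel : fC x - fC y ≤ n * ((sp + 2) * L * (d / n) + c * (d / n) ^ 2) := by
      rw [← hg0, ← hgn, ← Finset.sum_range_sub' g n]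
      calc ∑ k ∈ Finset.range n, (g k - g (k + 1))
          ≤ ∑ k ∈ Finset.range n, ((sp + 2) * L * (d / n) + c * (d / n) ^ 2) :=
            Finset.sum_le_sum hterm
        _ = n * ((sp + 2) * L * (d / n) + c * (d / n) ^ 2) := by
            rw [Finset.sum_const, Finset.card_range, nsmul_eq_mul]
    have halg : (n : ℝ) * ((sp + 2) * L * (d / n) + c * (d / n) ^ 2)
        = (sp + 2) * L * d + c * d ^ 2 / n := by
      field_simp
    have hsmall : c * d ^ 2 / n ≤ δ := by
      rw [div_le_iff₀ hnR]
      have : c * d ^ 2 < δ * n := by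
        have := (div_lt_iff₀ hδ).mp hn
        linarith [this]
      linarith
    rw [halg] at htel
    linarith
  intro x hx y hy
  have h1 := key x hx y hy
  have h2 := key y hy x hx
  rw [norm_sub_rev y x] at h2
  exact abs_sub_le_iff.mpr ⟨h1, h2⟩
end

section
/- Let F be directionally differentiable on a convex set Theta, and for theta' in Theta let Fhat(.; theta') be a family of convex upper surrogates (Fhat(theta; theta') >= F(theta) for all theta, Fhat(theta'; theta') = F(theta')) whose minimum Fhat_min(.; theta') is directionally differentiable with Fhat_min(.; theta')'(theta'; d) = F'(theta'; d) for all d. Then every global minimizer theta* of F over Theta is a composite (eps, rho)-strongly d-stationary point for every eps >= 0 and rho > 0, i.e., theta* is the unique minimizer over Theta of theta -> Fhat_min(theta; theta*) + (rho/2)||theta - theta*||^2. -/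
/-- Every global minimizer of `F` over `Θ` is a composite `(ε, ρ)`-strongly d-stationary
point: it is the unique minimizer over `Θ` of
`θ ↦ Fmin(θ; θ*) + (ρ/2)‖θ - θ*‖²`, where `Fmin(·; θ')` is the minimum of a family of
convex upper surrogates of `F` at `θ'` satisfying the touching and directional-derivative
consistency conditions. -/
theorem stmt10 {q : ℕ} (Θ : Set (EuclideanSpace ℝ (Fin q))) (hΘ : Convex ℝ Θ)
    (F : EuclideanSpace ℝ (Fin q) → ℝ)
    {ι : Type*} [Nonempty ι]
    (Fhat : EuclideanSpace ℝ (Fin q) → ι → EuclideanSpace ℝ (Fin q) → ℝ)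
    (hconv : ∀ θ' ∈ Θ, ∀ i, ConvexOn ℝ Θ (Fhat θ' i))
    (hmaj : ∀ θ' ∈ Θ, ∀ i, ∀ θ ∈ Θ, F θ ≤ Fhat θ' i θ)
    (htouch : ∀ θ' ∈ Θ, ∃ i, Fhat θ' i θ' = F θ')
    (Fmin : EuclideanSpace ℝ (Fin q) → EuclideanSpace ℝ (Fin q) → ℝ)
    (hFmin : ∀ θ' θ, Fmin θ' θ = ⨅ i, Fhat θ' i θ)
    (hdd : ∀ θ' ∈ Θ, ∀ d, derivWithin (fun t : ℝ => Fmin θ' (θ' + t • d)) (Set.Ici 0) 0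
        = derivWithin (fun t : ℝ => F (θ' + t • d)) (Set.Ici 0) 0)
    (θstar : EuclideanSpace ℝ (Fin q)) (hθ : θstar ∈ Θ)
    (hmin : ∀ θ ∈ Θ, F θstar ≤ F θ)
    (ρ : ℝ) (hρ : 0 < ρ) :
    (∀ θ ∈ Θ, Fmin θstar θstar ≤ Fmin θstar θ + ρ / 2 * ‖θ - θstar‖ ^ 2) ∧
    (∀ θ ∈ Θ, Fmin θstar θ + ρ / 2 * ‖θ - θstar‖ ^ 2 ≤ Fmin θstar θstar → θ = θstar) := by
  have h1 : ∀ θ ∈ Θ, F θ ≤ Fmin θstar θ := by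
    intro θ hθ'
    rw [hFmin]
    exact le_ciInf fun i => hmaj θstar hθ i θ hθ'
  have h2 : Fmin θstar θstar = F θstar := by
    obtain ⟨i, hi⟩ := htouch θstar hθ
    refine le_antisymm ?_ (h1 θstar hθ)
    rw [hFmin]
    calc ⨅ j, Fhat θstar j θstar ≤ Fhat θstar i θstar := by
          exact ciInf_le ⟨F θstar, Set.forall_mem_range.2 fun j => hmaj θstar hθ j θstar hθ⟩ i
      _ = F θstar := hi
  constructor
  · intro θ hθ'
    have := le_trans (hmin θ hθ') (h1 θ hθ')
    nlinarith [sq_nonneg ‖θ - θstar‖]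
  · intro θ hθ' hle
    have := le_trans (hmin θ hθ') (h1 θ hθ')
    have hnorm : ‖θ - θstar‖ ^ 2 ≤ 0 := by nlinarith
    have : ‖θ - θstar‖ = 0 := by nlinarith [sq_nonneg ‖θ - θstar‖, norm_nonneg (θ - θstar)]
    have := norm_eq_zero.mp this
    exact sub_eq_zero.mp this
end

section
/- Let Theta be convex, F directionally differentiable on Theta, and suppose theta^d is a composite (eps, rho)-strongly d-stationary point, where the minimum surrogate Fhat_min(.; theta^d) is directionally differentiable with Fhat_min(.; theta^d)'(theta^d; d) = F'(theta^d; d) for all directions d. Then theta^d is a d-stationary point of F on Theta: F'(theta^d; theta - theta^d) >= 0 for all theta in Theta. -/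
/-!
Along the segment from `θᵈ` to `θ`, the proximal objective `Fmin + (ρ/2)‖· - θᵈ‖²` has a
one-sided local minimum at `t = 0`, so its right derivative there is nonnegative. The
proximal term is quadratic in `t` and contributes nothing to that derivative, and
directional-derivative consistency turns the right derivative of `Fmin` into that of `F`.
-/

open Set

/-- No differentiability is needed: `derivWithin` is `0` where the derivative does not
exist. -/
theorem IsLocalMinOn.derivWithin_Ici_nonneg {f : ℝ → ℝ} {a : ℝ}
    (h : IsLocalMinOn f (Ici a) a) : 0 ≤ derivWithin f (Ici a) a := by
  have hseg : segment ℝ a (a + 1) ⊆ Ici a :=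
    (segment_subset_Icc (by linarith)).trans Icc_subset_Ici_self
  exact h.fderivWithin_nonneg (mem_posTangentConeAt_of_segment_subset hseg)

section

variable {E : Type*} [NormedAddCommGroup E] [NormedSpace ℝ E]

theorem Convex.isLocalMinOn_Ici_of_forall_le_add_mul_norm_sub_sq {s : Set E}
    (hs : Convex ℝ s) {f : E → ℝ} {x y : E} (hx : x ∈ s) (hy : y ∈ s) {c : ℝ}
    (hmin : ∀ z ∈ s, f x ≤ f z + c * ‖z - x‖ ^ 2) :
    IsLocalMinOn (fun t : ℝ => f (x + t • (y - x)) + c * ‖t • (y - x)‖ ^ 2) (Ici 0) 0 := by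
  filter_upwards [Icc_mem_nhdsGE zero_lt_one] with t ht
  simpa using hmin _ (hs.add_smul_sub_mem hx hy ht)

theorem derivWithin_Ici_add_mul_norm_smul_sq {g : ℝ → ℝ}
    (hg : DifferentiableWithinAt ℝ g (Ici 0) 0) (c : ℝ) (d : E) :
    derivWithin (fun t : ℝ => g t + c * ‖t • d‖ ^ 2) (Ici 0) 0 = derivWithin g (Ici 0) 0 := by
  have hquad : HasDerivAt (fun t : ℝ => c * ‖t • d‖ ^ 2) 0 0 := by
    have hform : (fun t : ℝ => c * ‖t • d‖ ^ 2) = fun t => c * ‖d‖ ^ 2 * t ^ 2 := by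
      funext t
      rw [norm_smul, Real.norm_eq_abs, mul_pow, sq_abs]
      ring
    simpa [hform] using (hasDerivAt_pow 2 (0 : ℝ)).const_mul (c * ‖d‖ ^ 2)
  exact ((hg.hasDerivWithinAt.add hquad.hasDerivWithinAt).derivWithin
    (uniqueDiffWithinAt_Ici 0)).trans (add_zero _)

end

theorem stmt11_general {q : ℕ} (Θ : Set (EuclideanSpace ℝ (Fin q))) (hΘ : Convex ℝ Θ)
    (F Fmin : EuclideanSpace ℝ (Fin q) → ℝ)
    (θd : EuclideanSpace ℝ (Fin q)) (hθd : θd ∈ Θ) (ρ : ℝ)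
    (hMdd : ∀ d, DifferentiableWithinAt ℝ (fun t : ℝ => Fmin (θd + t • d)) (Set.Ici 0) 0)
    (hdd : ∀ d, derivWithin (fun t : ℝ => Fmin (θd + t • d)) (Set.Ici 0) 0
        = derivWithin (fun t : ℝ => F (θd + t • d)) (Set.Ici 0) 0)
    (hmin : ∀ θ ∈ Θ, Fmin θd ≤ Fmin θ + ρ / 2 * ‖θ - θd‖ ^ 2) :
    ∀ θ ∈ Θ, 0 ≤ derivWithin (fun t : ℝ => F (θd + t • (θ - θd))) (Set.Ici 0) 0 := by
  intro θ hθ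
  have hlocal :=
    (hΘ.isLocalMinOn_Ici_of_forall_le_add_mul_norm_sub_sq hθd hθ hmin).derivWithin_Ici_nonneg
  rwa [derivWithin_Ici_add_mul_norm_smul_sq (hMdd _), hdd] at hlocal

/-- A composite `(ε, ρ)`-strongly d-stationary point `θᵈ` (the unique minimizer over the
convex set `Θ` of `θ ↦ Fmin(θ) + (ρ/2)‖θ - θᵈ‖²`, with `Fmin` the minimum surrogate at
`θᵈ` satisfying directional-derivative consistency with `F`) is a d-stationary point of
`F` on `Θ`: `F'(θᵈ; θ - θᵈ) ≥ 0` for all `θ ∈ Θ`. -/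
theorem stmt11 {q : ℕ} (Θ : Set (EuclideanSpace ℝ (Fin q))) (hΘ : Convex ℝ Θ)
    (F Fmin : EuclideanSpace ℝ (Fin q) → ℝ)
    (θd : EuclideanSpace ℝ (Fin q)) (hθd : θd ∈ Θ) (ρ : ℝ) (hρ : 0 < ρ)
    (hFdd : ∀ d, DifferentiableWithinAt ℝ (fun t : ℝ => F (θd + t • d)) (Set.Ici 0) 0)
    (hMdd : ∀ d, DifferentiableWithinAt ℝ (fun t : ℝ => Fmin (θd + t • d)) (Set.Ici 0) 0)
    (hdd : ∀ d, derivWithin (fun t : ℝ => Fmin (θd + t • d)) (Set.Ici 0) 0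
        = derivWithin (fun t : ℝ => F (θd + t • d)) (Set.Ici 0) 0)
    (hmin : ∀ θ ∈ Θ, Fmin θd ≤ Fmin θ + ρ / 2 * ‖θ - θd‖ ^ 2)
    (huniq : ∀ θ ∈ Θ, Fmin θ + ρ / 2 * ‖θ - θd‖ ^ 2 ≤ Fmin θd → θ = θd) :
    ∀ θ ∈ Θ, 0 ≤ derivWithin (fun t : ℝ => F (θd + t • (θ - θd))) (Set.Ici 0) 0 :=
  stmt11_general Θ hΘ F Fmin θd hθd ρ hMdd hdd hmin
end

section
/- Let Theta be convex, F directionally differentiable, and for each active index mapping I in I^0(theta^d) let Fhat(.; theta^d, I) be a convex upper surrogate with Fhat(theta^d; theta^d, I) = F(theta^d). If theta^d is a d-stationary point of F on Theta (F'(theta^d; theta - theta^d) >= 0 for all theta in Theta), then for every rho > 0 and every I in I^0(theta^d), theta^d is the unique minimizer over Theta of theta -> Fhat(theta; theta^d, I) + (rho/2)||theta - theta^d||^2. Consequently S^d = S^d_{0,rho} for every rho > 0. -/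
/-- If `θᵈ` is a d-stationary point of `F` on the convex set `Θ` and `Fhat` is a convex
upper surrogate of `F` on `Θ` touching `F` at `θᵈ` (as holds for any active index mapping
`I ∈ I⁰(θᵈ)`), then for every `ρ > 0`, `θᵈ` is the unique minimizer over `Θ` of
`θ ↦ Fhat(θ) + (ρ/2)‖θ - θᵈ‖²`; consequently `S^d = S^d_{0,ρ}`. -/
theorem stmt12 {q : ℕ} (Θ : Set (EuclideanSpace ℝ (Fin q))) (hΘ : Convex ℝ Θ)
    (F Fhat : EuclideanSpace ℝ (Fin q) → ℝ)
    (θd : EuclideanSpace ℝ (Fin q)) (hθd : θd ∈ Θ)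
    (hconv : ConvexOn ℝ Θ Fhat)
    (hmaj : ∀ θ ∈ Θ, F θ ≤ Fhat θ)
    (htouch : Fhat θd = F θd)
    (hFdd : ∀ d, DifferentiableWithinAt ℝ (fun t : ℝ => F (θd + t • d)) (Set.Ici 0) 0)
    (hstat : ∀ θ ∈ Θ, 0 ≤ derivWithin (fun t : ℝ => F (θd + t • (θ - θd))) (Set.Ici 0) 0)
    (ρ : ℝ) (hρ : 0 < ρ) :
    (∀ θ ∈ Θ, Fhat θd ≤ Fhat θ + ρ / 2 * ‖θ - θd‖ ^ 2) ∧
    (∀ θ ∈ Θ, Fhat θ + ρ / 2 * ‖θ - θd‖ ^ 2 ≤ Fhat θd → θ = θd) := by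
  have key : ∀ θ ∈ Θ, Fhat θd ≤ Fhat θ := by
    intro θ hθ
    set g : ℝ → ℝ := fun t : ℝ => F (θd + t • (θ - θd)) with hg
    have hder : HasDerivWithinAt g (derivWithin g (Set.Ici 0) 0) (Set.Ici 0) 0 :=
      (hFdd (θ - θd)).hasDerivWithinAt
    have hslope : Filter.Tendsto (slope g 0) (nhdsWithin 0 (Set.Ioi 0))
        (nhds (derivWithin g (Set.Ici 0) 0)) := by
      have := hasDerivWithinAt_iff_tendsto_slope.mp hder
      rwa [Set.Ici_sdiff_left] at this
    have hg0 : g 0 = Fhat θd := by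
      simp [hg, htouch]
    have hev : ∀ᶠ t in nhdsWithin 0 (Set.Ioi 0), slope g 0 t ≤ Fhat θ - Fhat θd := by
      filter_upwards [Ioo_mem_nhdsGT_of_mem (Set.left_mem_Ico.mpr one_pos : (0:ℝ) ∈ Set.Ico 0 1)] with t ht
      have h1 : θd + t • (θ - θd) = (1 - t) • θd + t • θ := by
        rw [smul_sub, sub_smul, one_smul]; abel
      have hmemΘ : θd + t • (θ - θd) ∈ Θ := by
        rw [h1]
        exact hΘ hθd hθ (by linarith [ht.2]) ht.1.le (by ring)
      have h2 : g t ≤ (1 - t) * Fhat θd + t * Fhat θ := by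
        calc g t ≤ Fhat (θd + t • (θ - θd)) := hmaj _ hmemΘ
          _ ≤ (1 - t) * Fhat θd + t * Fhat θ := by
            rw [h1]
            exact hconv.2 hθd hθ (by linarith [ht.2]) ht.1.le (by ring)
      rw [slope_def_field, sub_zero, div_le_iff₀ ht.1, hg0]
      nlinarith [ht.1]
    have hd0 : derivWithin g (Set.Ici 0) 0 ≤ Fhat θ - Fhat θd :=
      le_of_tendsto hslope hev
    have := hstat θ hθ
    linarith
  constructor
  · intro θ hθ
    have h1 : (0:ℝ) ≤ ρ / 2 * ‖θ - θd‖ ^ 2 := by positivity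
    linarith [key θ hθ]
  · intro θ hθ hle
    have h1 : ρ / 2 * ‖θ - θd‖ ^ 2 ≤ 0 := by linarith [key θ hθ]
    have h2 : ‖θ - θd‖ ^ 2 ≤ 0 := by
      nlinarith
    have : ‖θ - θd‖ = 0 := by nlinarith [norm_nonneg (θ - θd), sq_nonneg ‖θ - θd‖]
    have := norm_eq_zero.mp this
    rwa [sub_eq_zero] at this
end

section
/- Let g, h: R^q -> R be convex with g = max_{i in [K]} g_i and h = max_{i in [K]} h_i for affine functions g_i, h_i, and let phi = phi_up + phi_down where phi_up is nondecreasing convex and phi_down is nonincreasing convex (functions R -> R). For an index i2 with h_{i2}(theta') = h(theta') and i1 with g_{i1}(theta') = g(theta'), define Fhat(theta) = phi_up(g(theta) - h_{i2}(theta)) + phi_down(g_{i1}(theta) - h(theta)). Then Fhat is convex, Fhat(theta) >= phi(g(theta) - h(theta)) for all theta, and Fhat(theta') = phi(g(theta') - h(theta')). -/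
open scoped RealInnerProductSpace

private lemma convexOn_sup' {E : Type*} [AddCommGroup E] [Module ℝ E] {ι : Type*}
    (s : Finset ι) (hs : s.Nonempty) (f : ι → E → ℝ)
    (hf : ∀ i, ConvexOn ℝ Set.univ (f i)) :
    ConvexOn ℝ Set.univ (fun θ => s.sup' hs fun i => f i θ) := by
  refine ⟨convex_univ, fun x _ y _ a b ha hb hab => ?_⟩
  rw [Finset.sup'_le_iff]
  intro i hi
  calc f i (a • x + b • y) ≤ a * f i x + b * f i y :=
        (hf i).2 (Set.mem_univ x) (Set.mem_univ y) ha hb hab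
  _ ≤ a * (s.sup' hs fun j => f j x) + b * (s.sup' hs fun j => f j y) := by
      gcongr
      · exact Finset.le_sup' (fun j => f j x) hi
      · exact Finset.le_sup' (fun j => f j y) hi

private lemma comp_mono_convex {E : Type*} [AddCommGroup E] [Module ℝ E]
    {φ : ℝ → ℝ} {f : E → ℝ} (hφ : ConvexOn ℝ Set.univ φ) (hm : Monotone φ)
    (hf : ConvexOn ℝ Set.univ f) : ConvexOn ℝ Set.univ (fun θ => φ (f θ)) :=
  ⟨convex_univ, fun x _ y _ a b ha hb hab =>
    (hm (hf.2 (Set.mem_univ x) (Set.mem_univ y) ha hb hab)).trans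
      (hφ.2 (Set.mem_univ _) (Set.mem_univ _) ha hb hab)⟩

private lemma comp_anti_concave {E : Type*} [AddCommGroup E] [Module ℝ E]
    {φ : ℝ → ℝ} {f : E → ℝ} (hφ : ConvexOn ℝ Set.univ φ) (hm : Antitone φ)
    (hf : ConcaveOn ℝ Set.univ f) : ConvexOn ℝ Set.univ (fun θ => φ (f θ)) :=
  ⟨convex_univ, fun x _ y _ a b ha hb hab =>
    (hm (hf.2 (Set.mem_univ x) (Set.mem_univ y) ha hb hab)).trans
      (hφ.2 (Set.mem_univ _) (Set.mem_univ _) ha hb hab)⟩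

private lemma affine_convex {q : ℕ} (a : EuclideanSpace ℝ (Fin q)) (c : ℝ) :
    ConvexOn ℝ Set.univ (fun θ : EuclideanSpace ℝ (Fin q) => ⟪a, θ⟫ + c) := by
  refine ⟨convex_univ, fun x _ y _ s t hs ht hst => ?_⟩
  simp only [inner_add_right, real_inner_smul_right, smul_eq_mul]
  have h1 : s * c + t * c = c := by rw [← add_mul, hst, one_mul]
  nlinarith [h1]

private lemma affine_concave {q : ℕ} (a : EuclideanSpace ℝ (Fin q)) (c : ℝ) :
    ConcaveOn ℝ Set.univ (fun θ : EuclideanSpace ℝ (Fin q) => ⟪a, θ⟫ + c) := by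
  refine ⟨convex_univ, fun x _ y _ s t hs ht hst => ?_⟩
  simp only [inner_add_right, real_inner_smul_right, smul_eq_mul]
  have h1 : s * c + t * c = c := by rw [← add_mul, hst, one_mul]
  nlinarith [h1]

/-- Surrogation construction for a monotone convex decomposition of the outer function:
with `g = max_i g_i`, `h = max_i h_i` max-affine, `φ = φ↑ + φ↓` with `φ↑` nondecreasing
convex and `φ↓` nonincreasing convex, and active indices `i₁` for `g` and `i₂` for `h`
at `θ'`, the function `Fhat(θ) = φ↑(g(θ) - h_{i₂}(θ)) + φ↓(g_{i₁}(θ) - h(θ))` is convex,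
majorizes `φ(g - h)`, and touches it at `θ'`. -/
theorem stmt14 {q K : ℕ} (hK : 0 < K)
    (ag ah : Fin K → EuclideanSpace ℝ (Fin q)) (cg ch : Fin K → ℝ)
    (g h : EuclideanSpace ℝ (Fin q) → ℝ)
    (hg : ∀ θ, g θ = Finset.univ.sup' (Finset.univ_nonempty_iff.mpr ⟨⟨0, hK⟩⟩)
        (fun i => ⟪ag i, θ⟫ + cg i))
    (hh : ∀ θ, h θ = Finset.univ.sup' (Finset.univ_nonempty_iff.mpr ⟨⟨0, hK⟩⟩)
        (fun i => ⟪ah i, θ⟫ + ch i))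
    (φup φdown : ℝ → ℝ)
    (hup : ConvexOn ℝ Set.univ φup) (hupmono : Monotone φup)
    (hdown : ConvexOn ℝ Set.univ φdown) (hdownanti : Antitone φdown)
    (θ' : EuclideanSpace ℝ (Fin q)) (i₁ i₂ : Fin K)
    (hi₁ : ⟪ag i₁, θ'⟫ + cg i₁ = g θ')
    (hi₂ : ⟪ah i₂, θ'⟫ + ch i₂ = h θ')
    (Fhat : EuclideanSpace ℝ (Fin q) → ℝ)
    (hFhat : ∀ θ, Fhat θ = φup (g θ - (⟪ah i₂, θ⟫ + ch i₂))
        + φdown ((⟪ag i₁, θ⟫ + cg i₁) - h θ)) :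
    ConvexOn ℝ Set.univ Fhat ∧
    (∀ θ, φup (g θ - h θ) + φdown (g θ - h θ) ≤ Fhat θ) ∧
    Fhat θ' = φup (g θ' - h θ') + φdown (g θ' - h θ') := by
  have hne : (Finset.univ : Finset (Fin K)).Nonempty := Finset.univ_nonempty_iff.mpr ⟨⟨0, hK⟩⟩
  have hgconv : ConvexOn ℝ Set.univ g := by
    have := convexOn_sup' (Finset.univ : Finset (Fin K)) hne
      (fun i θ => ⟪ag i, θ⟫ + cg i) (fun i => affine_convex _ _)
    exact this.congr (fun θ _ => (hg θ).symm)
  have hhconv : ConvexOn ℝ Set.univ h := by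
    have := convexOn_sup' (Finset.univ : Finset (Fin K)) hne
      (fun i θ => ⟪ah i, θ⟫ + ch i) (fun i => affine_convex _ _)
    exact this.congr (fun θ _ => (hh θ).symm)
  -- inner convex/concave pieces
  have hc1 : ConvexOn ℝ Set.univ (fun θ => g θ - (⟪ah i₂, θ⟫ + ch i₂)) := by
    have := hgconv.sub (affine_concave (ah i₂) (ch i₂))
    exact this
  have hc2 : ConcaveOn ℝ Set.univ (fun θ => (⟪ag i₁, θ⟫ + cg i₁) - h θ) := by
    have := (affine_concave (ag i₁) (cg i₁)).sub hhconv
    exact this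
  have hF1 : ConvexOn ℝ Set.univ (fun θ => φup (g θ - (⟪ah i₂, θ⟫ + ch i₂))) :=
    comp_mono_convex hup hupmono hc1
  have hF2 : ConvexOn ℝ Set.univ (fun θ => φdown ((⟪ag i₁, θ⟫ + cg i₁) - h θ)) :=
    comp_anti_concave hdown hdownanti hc2
  have hle_h : ∀ θ, ⟪ah i₂, θ⟫ + ch i₂ ≤ h θ := by
    intro θ; rw [hh θ]
    exact Finset.le_sup' (fun i => ⟪ah i, θ⟫ + ch i) (Finset.mem_univ i₂)
  have hle_g : ∀ θ, ⟪ag i₁, θ⟫ + cg i₁ ≤ g θ := by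
    intro θ; rw [hg θ]
    exact Finset.le_sup' (fun i => ⟪ag i, θ⟫ + cg i) (Finset.mem_univ i₁)
  refine ⟨(hF1.add hF2).congr (fun θ _ => (hFhat θ).symm), fun θ => ?_, ?_⟩
  · rw [hFhat θ]
    have h1 : φup (g θ - h θ) ≤ φup (g θ - (⟪ah i₂, θ⟫ + ch i₂)) :=
      hupmono (by linarith [hle_h θ])
    have h2 : φdown (g θ - h θ) ≤ φdown ((⟪ag i₁, θ⟫ + cg i₁) - h θ) :=
      hdownanti (by linarith [hle_g θ])
    linarith
  · rw [hFhat θ', hi₁, hi₂]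
end

section
/- Let F be a piecewise affine function on a compact polyhedral set Theta in R^q, i.e., Theta decomposes into finitely many polyhedra on each of which F is affine. Define r_d(theta) = max{ -F'(theta; d) : d in T(theta; Theta), ||d|| <= 1 }, where T(theta; Theta) is the tangent cone. Then there exists eta > 0 such that dist(theta, S^d) <= eta * r_d(theta) for all theta in Theta, where S^d is the set of d-stationary points of F on Theta. -/
/-!
On the polyhedron `Θ`, the tangent cone `T(θ; Θ)` and the map `d ↦ F'(θ; d)` depend only on
which constraints of `Θ` and of the pieces `Pᵢ` are active at `θ` and on which pieces contain `θ`: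
the tangent cone is the cone of the active constraints (together with its negative, since
Mathlib's tangent cone admits scalars of both signs), and `F'(θ; d) = φᵢ d` for any piece `Pᵢ`
that contains `θ` and into which `d` points. Hence `r_d` takes finitely many values on `Θ`, and
its positive values are bounded below by some `δ > 0`. Where `r_d(θ) = 0`, `θ` is d-stationary;
elsewhere `dist(θ, S^d) ≤ diam Θ ≤ (diam Θ + 1) / δ · r_d(θ)`, where `S^d` is nonempty because it
contains a minimiser of the continuous function `F` on the compact set `Θ`.
-/

/-- One-sided directional derivative `F'(θ; d)`. -/
noncomputable def dirDeriv {q : ℕ} (F : EuclideanSpace ℝ (Fin q) → ℝ)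
    (θ d : EuclideanSpace ℝ (Fin q)) : ℝ :=
  derivWithin (fun t : ℝ => F (θ + t • d)) (Set.Ici 0) 0

open Filter Set Metric
open scoped Topology Pointwise

theorem Set.finite_image_of_factorsThrough {X Y Z : Type*} [Finite Z] {s : Set X} {f : X → Y}
    (σ : X → Z) (h : ∀ x ∈ s, ∀ y ∈ s, σ x = σ y → f x = f y) : (f '' s).Finite := by
  have hsub : f '' s ⊆ ⋃ z, f '' {x ∈ s | σ x = z} := by
    rintro _ ⟨x, hx, rfl⟩
    exact mem_iUnion.2 ⟨σ x, x, ⟨hx, rfl⟩, rfl⟩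
  refine (finite_iUnion fun z => Subsingleton.finite ?_).subset hsub
  rintro _ ⟨x, ⟨hx, rfl⟩, rfl⟩ _ ⟨y, ⟨hy, hxy⟩, rfl⟩
  exact h x hx y hy hxy.symm

theorem exists_infDist_le_mul_of_finite_image {X : Type*} [PseudoMetricSpace X] {Θ S : Set X}
    {r : X → ℝ} (hΘ : Bornology.IsBounded Θ) (hfin : (r '' Θ).Finite)
    (hr : ∀ θ ∈ Θ, 0 ≤ r θ) (hS : ∀ θ ∈ Θ, r θ ≤ 0 → θ ∈ S) (hSΘ : S ⊆ Θ)
    (hSne : Θ.Nonempty → S.Nonempty) : ∃ η > 0, ∀ θ ∈ Θ, infDist θ S ≤ η * r θ := by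
  have hgap : ∀ᶠ δ in 𝓝[>] (0 : ℝ), ∀ y ∈ r '' Θ, 0 < y → δ ≤ y :=
    hfin.eventually_all.2 fun y _ => by
      rcases le_or_gt y 0 with hy | hy
      · exact Eventually.of_forall fun _ h => absurd h hy.not_gt
      · filter_upwards [Ioo_mem_nhdsGT hy] with δ hδ _ using hδ.2.le
  obtain ⟨δ, hδ, hδpos⟩ := (hgap.and self_mem_nhdsWithin).exists
  refine ⟨(diam Θ + 1) / δ, div_pos (by positivity) hδpos, fun θ hθ => ?_⟩
  rcases le_or_gt (r θ) 0 with hrθ | hrθ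
  · rw [infDist_zero_of_mem (hS θ hθ hrθ)]
    exact mul_nonneg (div_pos (by positivity) hδpos).le (hr θ hθ)
  · obtain ⟨s, hs⟩ := hSne ⟨θ, hθ⟩
    calc infDist θ S ≤ dist θ s := infDist_le_dist_of_mem hs
      _ ≤ diam Θ := dist_le_diam_of_mem hΘ hθ (hSΘ hs)
      _ ≤ (diam Θ + 1) / δ * δ := by rw [div_mul_cancel₀ _ hδpos.ne']; linarith
      _ ≤ (diam Θ + 1) / δ * r θ := by
        gcongr
        exact hδ _ (mem_image_of_mem r hθ) hrθ

section TangentCone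

variable {E : Type*} [NormedAddCommGroup E] [NormedSpace ℝ E] {s : Set E} {x d : E}

theorem neg_mem_tangentConeAt (h : d ∈ tangentConeAt ℝ s x) : -d ∈ tangentConeAt ℝ s x := by
  obtain ⟨α, l, hl, c, v, hv, hmem, hlim⟩ := exists_fun_of_mem_tangentConeAt h
  exact mem_tangentConeAt_of_seq l (-c) v hv hmem
    (by simpa only [Pi.neg_apply, neg_smul] using hlim.neg)

theorem mem_tangentConeAt_of_eventually_add_smul_mem
    (h : ∀ᶠ t in 𝓝[>] (0 : ℝ), x + t • d ∈ s) : d ∈ tangentConeAt ℝ s x :=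
  mem_tangentConeAt_of_add_smul_mem (tendsto_id'.2 (nhdsGT_le_nhdsNE 0)) h

theorem Convex.smul_sub_mem_tangentConeAt (hs : Convex ℝ s) (hx : x ∈ s) {y : E} (hy : y ∈ s)
    {c : ℝ} (hc : 0 ≤ c) : c • (y - x) ∈ tangentConeAt ℝ s x := by
  refine mem_tangentConeAt_of_eventually_add_smul_mem ?_
  have hsmall : ∀ᶠ t in 𝓝[>] (0 : ℝ), t * c ≤ 1 :=
    nhdsWithin_le_nhds <| (continuous_mul_const c).tendsto' 0 0 (zero_mul c) |>.eventually
      (eventually_le_nhds one_pos)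
  filter_upwards [hsmall, self_mem_nhdsWithin] with t ht htpos
  rw [smul_smul]
  exact hs.add_smul_sub_mem hx hy ⟨mul_nonneg (le_of_lt htpos) hc, ht⟩

end TangentCone

section Polyhedron

variable {E : Type*} [NormedAddCommGroup E] [NormedSpace ℝ E] {ι : Type*}
  (B : ι → E →L[ℝ] ℝ) (b : ι → ℝ)

def polyhedron : Set E := {x | ∀ j, B j x ≤ b j}

def activeSet (x : E) : Set ι := {j | B j x = b j}

def activeCone (x : E) : Set E := {d | ∀ j ∈ activeSet B b x, B j d ≤ 0}

variable {B b}

theorem isClosed_polyhedron : IsClosed (polyhedron B b) := by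
  simp only [polyhedron, ofPred_forall]
  exact isClosed_iInter fun j => isClosed_le (B j).continuous continuous_const

theorem convex_polyhedron : Convex ℝ (polyhedron B b) := by
  simp only [polyhedron, ofPred_forall]
  exact convex_iInter fun j => convex_halfSpace_le (B j).isLinear (b j)

theorem activeCone_congr {x y : E} (h : activeSet B b x = activeSet B b y) :
    activeCone B b x = activeCone B b y := by
  simp only [activeCone, h]

theorem mem_activeCone_of_add_smul_mem {x d : E} {t : ℝ} (ht : 0 < t)
    (h : x + t • d ∈ polyhedron B b) : d ∈ activeCone B b x := by
  intro j hj
  have := h j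
  rw [map_add, map_smul, smul_eq_mul, hj] at this
  nlinarith

theorem eventually_add_smul_mem_polyhedron [Finite ι] {x d : E} (hx : x ∈ polyhedron B b)
    (hd : d ∈ activeCone B b x) : ∀ᶠ t in 𝓝[≥] (0 : ℝ), x + t • d ∈ polyhedron B b := by
  refine eventually_all.2 fun j => ?_
  simp only [map_add, map_smul, smul_eq_mul]
  rcases (hx j).eq_or_lt with hj | hj
  · filter_upwards [self_mem_nhdsWithin] with t ht
    nlinarith [hd j hj, mem_Ici.1 ht]
  · have hcont : Continuous fun t : ℝ => B j x + t * B j d := by fun_prop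
    exact nhdsWithin_le_nhds <|
      (hcont.tendsto' 0 (B j x) (by simp)).eventually (eventually_le_nhds hj)

theorem tangentConeAt_polyhedron [Finite ι] {x : E} (hx : x ∈ polyhedron B b) :
    tangentConeAt ℝ (polyhedron B b) x = activeCone B b x ∪ -activeCone B b x := by
  refine Subset.antisymm (fun y hy => ?_) ?_
  · obtain ⟨α, l, hl, c, v, -, hmem, hlim⟩ := exists_fun_of_mem_tangentConeAt hy
    have hv : ∀ j ∈ activeSet B b x, ∀ᶠ n in l, B j (v n) ≤ 0 := fun j hj =>
      hmem.mono fun n hn => by linarith [map_add (B j) x (v n) ▸ hn j, show B j x = b j from hj]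
    have hlimj : ∀ j, Tendsto (fun n => c n * B j (v n)) l (𝓝 (B j y)) := fun j => by
      simpa only [Function.comp_def, map_smul, smul_eq_mul] using
        ((B j).continuous.tendsto y).comp hlim
    by_cases hc : ∃ᶠ n in l, 0 ≤ c n
    · refine Or.inl fun j hj => le_of_tendsto_of_frequently (hlimj j) ?_
      exact (hc.and_eventually (hv j hj)).mono fun n hn => mul_nonpos_of_nonneg_of_nonpos hn.1 hn.2
    · refine Or.inr fun j hj => ?_
      rw [map_neg, neg_nonpos]
      refine ge_of_tendsto (hlimj j) ?_
      filter_upwards [not_frequently.1 hc, hv j hj] with n hcn hvn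
      exact mul_nonneg_of_nonpos_of_nonpos (le_of_not_ge hcn) hvn
  · have hmem : ∀ d ∈ activeCone B b x, d ∈ tangentConeAt ℝ (polyhedron B b) x := fun d hd =>
      mem_tangentConeAt_of_eventually_add_smul_mem <|
        (eventually_add_smul_mem_polyhedron hx hd).filter_mono
          (nhdsWithin_mono _ Ioi_subset_Ici_self)
    rintro d (hd | hd)
    · exact hmem d hd
    · simpa using neg_mem_tangentConeAt (hmem _ hd)

end Polyhedron

section DirDeriv

variable {q : ℕ} {F : EuclideanSpace ℝ (Fin q) → ℝ} {θ d : EuclideanSpace ℝ (Fin q)}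

@[simp]
theorem dirDeriv_zero : dirDeriv F θ 0 = 0 := by
  simp [dirDeriv]

theorem dirDeriv_smul {c : ℝ} (hc : 0 ≤ c) : dirDeriv F θ (c • d) = c * dirDeriv F θ d := by
  have hcomp : (fun t : ℝ => F (θ + t • c • d)) = fun t => F (θ + (c * t) • d) := by
    simp only [smul_smul, mul_comm]
  rcases hc.eq_or_lt with rfl | hc
  · simp
  · rw [dirDeriv, hcomp, derivWithin_comp_mul_left c (fun t => F (θ + t • d)) (Ici 0) 0,
      LinearOrderedField.smul_Ici hc, mul_zero, smul_eq_mul, dirDeriv]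

theorem dirDeriv_eq_of_eventually_mem {P : Set (EuclideanSpace ℝ (Fin q))}
    {φ : EuclideanSpace ℝ (Fin q) →L[ℝ] ℝ} {a : ℝ} (hF : ∀ x ∈ P, F x = φ x + a)
    (h : ∀ᶠ t in 𝓝[≥] (0 : ℝ), θ + t • d ∈ P) : dirDeriv F θ d = φ d := by
  have hline : HasDerivWithinAt (fun t : ℝ => φ θ + t * φ d + a) (φ d) (Ici 0) 0 :=
    (((hasDerivAt_mul_const (φ d)).const_add (φ θ)).add_const a).hasDerivWithinAt
  have heq : (fun t : ℝ => F (θ + t • d)) =ᶠ[𝓝[≥] 0] fun t => φ θ + t * φ d + a := by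
    filter_upwards [h] with t ht
    rw [hF _ ht, map_add, map_smul, smul_eq_mul]
  exact (hline.congr_of_eventuallyEq heq (heq.eq_of_nhdsWithin self_mem_Ici)).derivWithin
    (uniqueDiffOn_Ici 0 0 self_mem_Ici)

theorem IsMinOn.dirDeriv_nonneg {s : Set (EuclideanSpace ℝ (Fin q))} (hs : Convex ℝ s)
    (hmin : IsMinOn F s θ) (hθ : θ ∈ s) {y : EuclideanSpace ℝ (Fin q)} (hy : y ∈ s) :
    0 ≤ dirDeriv F θ (y - θ) := by
  have hloc : IsLocalMinOn (fun t : ℝ => F (θ + t • (y - θ))) (Ici 0) 0 := by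
    filter_upwards [Icc_mem_nhdsGE (zero_lt_one' ℝ)] with t ht
    simpa using hmin (hs.add_smul_sub_mem hθ hy ht)
  have hone : (1 : ℝ) ∈ posTangentConeAt (Ici 0) 0 := by
    have h := sub_mem_posTangentConeAt_of_openSegment_subset
      ((openSegment_eq_Ioo (zero_lt_one' ℝ)).subset.trans
        (Ioo_subset_Ioi_self.trans Ioi_subset_Ici_self))
    rwa [sub_zero] at h
  -- `derivWithin g s 0` unfolds to `fderivWithin ℝ g s 0 1`; both are `0` if `g` is not
  -- differentiable, so no differentiability of `F` is needed.
  exact hloc.fderivWithin_nonneg hone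

end DirDeriv

section PolyhedralCover

variable {E : Type*} [NormedAddCommGroup E] [NormedSpace ℝ E] {ι : Type*} {κ : ι → Type*}
  {C : ∀ i, κ i → E →L[ℝ] ℝ} {c : ∀ i, κ i → ℝ}

theorem exists_mem_polyhedron_mem_activeCone [Finite ι]
    (hcover : ⋃ i, polyhedron (C i) (c i) = univ) (x d : E) :
    ∃ i, x ∈ polyhedron (C i) (c i) ∧ d ∈ activeCone (C i) (c i) x := by
  have hfreq : ∃ᶠ t in 𝓝[>] (0 : ℝ), ∃ i, x + t • d ∈ polyhedron (C i) (c i) :=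
    Frequently.of_forall fun t => mem_iUnion.1 (hcover ▸ mem_univ _)
  obtain ⟨i, hi⟩ := frequently_exists.1 hfreq
  have hline : Tendsto (fun t : ℝ => x + t • d) (𝓝[>] 0) (𝓝 x) :=
    ((continuous_const.add (continuous_id.smul continuous_const)).tendsto' 0 x (by simp)).mono_left
      nhdsWithin_le_nhds
  obtain ⟨t, ht, htpos⟩ := (hi.and_eventually self_mem_nhdsWithin).exists
  exact ⟨i, isClosed_polyhedron.mem_of_frequently_of_tendsto hi hline,
    mem_activeCone_of_add_smul_mem htpos ht⟩

theorem continuous_of_affine_on_polyhedra [Finite ι] {F : E → ℝ} {φ : ι → E →L[ℝ] ℝ}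
    {a : ι → ℝ} (hcover : ⋃ i, polyhedron (C i) (c i) = univ)
    (hF : ∀ i, ∀ x ∈ polyhedron (C i) (c i), F x = φ i x + a i) : Continuous F :=
  (locallyFinite_of_finite _).continuous hcover (fun _ => isClosed_polyhedron) fun i =>
    ((φ i).continuous.add continuous_const).continuousOn.congr (hF i)

end PolyhedralCover

section PiecewiseAffine

variable {q : ℕ} {F : EuclideanSpace ℝ (Fin q) → ℝ} {θ d : EuclideanSpace ℝ (Fin q)}

theorem dirDeriv_eq_of_mem_activeCone {κ : Type*} [Finite κ]
    {C : κ → EuclideanSpace ℝ (Fin q) →L[ℝ] ℝ} {c : κ → ℝ}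
    {φ : EuclideanSpace ℝ (Fin q) →L[ℝ] ℝ} {a : ℝ} (hF : ∀ x ∈ polyhedron C c, F x = φ x + a)
    (hθ : θ ∈ polyhedron C c) (hd : d ∈ activeCone C c θ) : dirDeriv F θ d = φ d :=
  dirDeriv_eq_of_eventually_mem hF (eventually_add_smul_mem_polyhedron hθ hd)

variable {ι : Type*} [Fintype ι] {κ : ι → Type*} [∀ i, Finite (κ i)]
  {C : ∀ i, κ i → EuclideanSpace ℝ (Fin q) →L[ℝ] ℝ} {c : ∀ i, κ i → ℝ}
  {φ : ι → EuclideanSpace ℝ (Fin q) →L[ℝ] ℝ} {a : ι → ℝ}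

theorem dirDeriv_eq_of_activeSet_eq (hcover : ⋃ i, polyhedron (C i) (c i) = univ)
    (hF : ∀ i, ∀ x ∈ polyhedron (C i) (c i), F x = φ i x + a i) {θ₁ θ₂ : EuclideanSpace ℝ (Fin q)}
    (hmem : ∀ i, θ₁ ∈ polyhedron (C i) (c i) ↔ θ₂ ∈ polyhedron (C i) (c i))
    (hact : ∀ i, activeSet (C i) (c i) θ₁ = activeSet (C i) (c i) θ₂) :
    dirDeriv F θ₁ = dirDeriv F θ₂ := funext fun d => by
  obtain ⟨i, hθ, hd⟩ := exists_mem_polyhedron_mem_activeCone hcover θ₁ d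
  rw [dirDeriv_eq_of_mem_activeCone (hF i) hθ hd,
    dirDeriv_eq_of_mem_activeCone (hF i) ((hmem i).1 hθ) (activeCone_congr (hact i) ▸ hd)]

theorem bddAbove_neg_dirDeriv (hcover : ⋃ i, polyhedron (C i) (c i) = univ)
    (hF : ∀ i, ∀ x ∈ polyhedron (C i) (c i), F x = φ i x + a i) :
    BddAbove ((fun d => -dirDeriv F θ d) '' closedBall 0 1) := by
  refine ⟨∑ i, ‖φ i‖, ?_⟩
  rintro _ ⟨d, hd, rfl⟩
  obtain ⟨i, hθ, hdi⟩ := exists_mem_polyhedron_mem_activeCone hcover θ d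
  calc -dirDeriv F θ d = -φ i d := by rw [dirDeriv_eq_of_mem_activeCone (hF i) hθ hdi]
    _ ≤ ‖φ i d‖ := neg_le_abs _
    _ ≤ ‖φ i‖ * ‖d‖ := (φ i).le_opNorm d
    _ ≤ ‖φ i‖ := mul_le_of_le_one_right (norm_nonneg _) (mem_closedBall_zero_iff.1 hd)
    _ ≤ ∑ i, ‖φ i‖ := Finset.single_le_sum (fun j _ => norm_nonneg (φ j)) (Finset.mem_univ i)

end PiecewiseAffine

section Residual

variable {q : ℕ} {Θ : Set (EuclideanSpace ℝ (Fin q))} {F : EuclideanSpace ℝ (Fin q) → ℝ}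
  {θ d : EuclideanSpace ℝ (Fin q)}

def dStationaryPoints (Θ : Set (EuclideanSpace ℝ (Fin q))) (F : EuclideanSpace ℝ (Fin q) → ℝ) :
    Set (EuclideanSpace ℝ (Fin q)) :=
  {θ ∈ Θ | ∀ θ' ∈ Θ, 0 ≤ dirDeriv F θ (θ' - θ)}

noncomputable def stationarityResidual (Θ : Set (EuclideanSpace ℝ (Fin q)))
    (F : EuclideanSpace ℝ (Fin q) → ℝ) (θ : EuclideanSpace ℝ (Fin q)) : ℝ :=
  sSup ((fun d => -dirDeriv F θ d) '' {d | d ∈ tangentConeAt ℝ Θ θ ∧ ‖d‖ ≤ 1})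

theorem le_stationarityResidual (hbdd : BddAbove ((fun d => -dirDeriv F θ d) '' closedBall 0 1))
    (hd : d ∈ tangentConeAt ℝ Θ θ) (hd1 : ‖d‖ ≤ 1) : -dirDeriv F θ d ≤ stationarityResidual Θ F θ :=
  le_csSup (hbdd.mono (image_mono fun _ h => mem_closedBall_zero_iff.2 h.2)) ⟨d, ⟨hd, hd1⟩, rfl⟩

theorem stationarityResidual_nonneg (hθ : θ ∈ Θ)
    (hbdd : BddAbove ((fun d => -dirDeriv F θ d) '' closedBall 0 1)) :
    0 ≤ stationarityResidual Θ F θ := by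
  simpa using le_stationarityResidual hbdd (zero_mem_tangentConeAt (subset_closure hθ))
    (norm_zero.trans_le zero_le_one)

theorem mem_dStationaryPoints_of_stationarityResidual_nonpos (hΘ : Convex ℝ Θ) (hθ : θ ∈ Θ)
    (hbdd : BddAbove ((fun d => -dirDeriv F θ d) '' closedBall 0 1))
    (hr : stationarityResidual Θ F θ ≤ 0) : θ ∈ dStationaryPoints Θ F := by
  refine ⟨hθ, fun θ' hθ' => ?_⟩
  set d := θ' - θ
  have hu : ‖d‖⁻¹ • d ∈ tangentConeAt ℝ Θ θ :=
    hΘ.smul_sub_mem_tangentConeAt hθ hθ' (inv_nonneg.2 (norm_nonneg d))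
  have hu1 : ‖‖d‖⁻¹ • d‖ ≤ 1 := by
    rw [norm_smul, norm_inv, norm_norm]
    exact inv_mul_le_one_of_le₀ le_rfl (norm_nonneg d)
  have hdu : d = ‖d‖ • ‖d‖⁻¹ • d := by
    rcases eq_or_ne d 0 with h | h
    · simp [h]
    · rw [smul_inv_smul₀ (norm_ne_zero_iff.2 h)]
  rw [hdu, dirDeriv_smul (norm_nonneg d)]
  exact mul_nonneg (norm_nonneg d) (by linarith [le_stationarityResidual hbdd hu hu1])

theorem IsMinOn.mem_dStationaryPoints (hΘ : Convex ℝ Θ) (hθ : θ ∈ Θ) (hmin : IsMinOn F Θ θ) :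
    θ ∈ dStationaryPoints Θ F :=
  ⟨hθ, fun _ hθ' => hmin.dirDeriv_nonneg hΘ hθ hθ'⟩

end Residual

theorem finite_stationarityResidual_image {q : ℕ} {F : EuclideanSpace ℝ (Fin q) → ℝ}
    {κ₀ : Type*} [Finite κ₀] {B : κ₀ → EuclideanSpace ℝ (Fin q) →L[ℝ] ℝ} {b : κ₀ → ℝ}
    {ι : Type*} [Fintype ι] {κ : ι → Type*} [∀ i, Finite (κ i)]
    {C : ∀ i, κ i → EuclideanSpace ℝ (Fin q) →L[ℝ] ℝ} {c : ∀ i, κ i → ℝ}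
    {φ : ι → EuclideanSpace ℝ (Fin q) →L[ℝ] ℝ} {a : ι → ℝ}
    (hcover : ⋃ i, polyhedron (C i) (c i) = univ)
    (hF : ∀ i, ∀ x ∈ polyhedron (C i) (c i), F x = φ i x + a i) :
    (stationarityResidual (polyhedron B b) F '' polyhedron B b).Finite := by
  refine Set.finite_image_of_factorsThrough (fun θ => (activeSet B b θ,
    {i | θ ∈ polyhedron (C i) (c i)}, fun i => activeSet (C i) (c i) θ)) ?_
  intro θ₁ hθ₁ θ₂ hθ₂ h
  simp only [Prod.mk.injEq] at h
  obtain ⟨hB, hP, hC⟩ := h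
  have hT : tangentConeAt ℝ (polyhedron B b) θ₁ = tangentConeAt ℝ (polyhedron B b) θ₂ := by
    rw [tangentConeAt_polyhedron hθ₁, tangentConeAt_polyhedron hθ₂, activeCone_congr hB]
  rw [stationarityResidual, stationarityResidual, hT,
    dirDeriv_eq_of_activeSet_eq hcover hF (fun i => Set.ext_iff.1 hP i) (congrFun hC)]

/-- Global error bound for a piecewise affine function on a compact polyhedron: with
`r_d(θ) = max{-F'(θ; d) : d ∈ T(θ; Θ), ‖d‖ ≤ 1}`, there exists `η > 0` such that
`dist(θ, S^d) ≤ η r_d(θ)` on `Θ`, where `S^d` is the set of d-stationary points of `F`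
on `Θ`. -/
theorem stmt16 {q : ℕ} (Θ : Set (EuclideanSpace ℝ (Fin q))) (hcomp : IsCompact Θ)
    (hΘpoly : ∃ (m : ℕ) (B : Fin m → (EuclideanSpace ℝ (Fin q) →L[ℝ] ℝ)) (b : Fin m → ℝ),
      Θ = {x | ∀ j, B j x ≤ b j})
    (F : EuclideanSpace ℝ (Fin q) → ℝ)
    (hPA : ∃ (n : ℕ) (P : Fin n → Set (EuclideanSpace ℝ (Fin q))),
      (Set.univ = ⋃ i, P i) ∧
      (∀ i, ∃ (m : ℕ) (B : Fin m → (EuclideanSpace ℝ (Fin q) →L[ℝ] ℝ)) (b : Fin m → ℝ),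
        P i = {x | ∀ j, B j x ≤ b j}) ∧
      (∀ i, ∃ (φ : EuclideanSpace ℝ (Fin q) →L[ℝ] ℝ) (c : ℝ), ∀ x ∈ P i, F x = φ x + c)) :
    ∃ η > (0 : ℝ), ∀ θ ∈ Θ,
      Metric.infDist θ {θ' ∈ Θ | ∀ θ'' ∈ Θ, 0 ≤ dirDeriv F θ' (θ'' - θ')} ≤
        η * sSup ((fun d => -dirDeriv F θ d) ''
          {d | d ∈ tangentConeAt ℝ Θ θ ∧ ‖d‖ ≤ 1}) := by
  obtain ⟨m, B, b, rfl⟩ := hΘpoly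
  obtain ⟨n, P, hcover, hP, hF⟩ := hPA
  choose mP C c hP using hP
  choose φ a hF using hF
  obtain rfl : P = fun i => polyhedron (C i) (c i) := funext hP
  have hbdd := fun θ => bddAbove_neg_dirDeriv (θ := θ) hcover.symm hF
  have hconv : Convex ℝ (polyhedron B b) := convex_polyhedron
  refine exists_infDist_le_mul_of_finite_image (S := dStationaryPoints (polyhedron B b) F)
    hcomp.isBounded (finite_stationarityResidual_image hcover.symm hF)
    (fun θ hθ => stationarityResidual_nonneg hθ (hbdd θ))
    (fun θ hθ => mem_dStationaryPoints_of_stationarityResidual_nonpos hconv hθ (hbdd θ))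
    (sep_subset _ _) fun hne => ?_
  obtain ⟨θ, hθ, hmin⟩ := hcomp.exists_isMinOn hne
    (continuous_of_affine_on_polyhedra hcover.symm hF).continuousOn
  exact ⟨θ, hmin.mem_dStationaryPoints hconv hθ⟩
end
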